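/- arXiv:2203.08030 — 11 statements merged into one kernel-verified Lean document; each statement's English description precedes it below -/
import Mathlib

section
/- Let B be a unital associative ℂ-algebra, ε : B → ℂ a unital ℂ-algebra homomorphism, and φ : B → ℂ a ℂ-linear functional satisfying the Gaussian product identity. Then for every n ≥ 2 and all a₁, …, aₙ ∈ B one has φ(a₁⋯aₙ) = Σ_{1≤j<k≤n} φ(aⱼaₖ)·Π_{i≠j,k} ε(aᵢ) − (n−2)·Σ_{1≤j≤n} φ(aⱼ)·Π_{i≠j} ε(aᵢ). -/
/-!
Write a product of at least two factors as `x * y * w`. The Gaussian identity for the three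
factors `x`, `y`, `w` expresses `φ (x * y * w)` through `φ (x * y)` and the shorter products
`φ (x * w)`, `φ (y * w)`, `φ w`, so the formula follows by strong induction on the number of
factors; peeling off the first factor, the sums over pairs and over single factors satisfy
simple recursions, which is all the induction needs.
-/

open Finset

theorem Fin.prod_finset_succ {M : Type*} [CommMonoid M] {n : ℕ}
    (s : Finset (Fin (n + 1))) (f : Fin (n + 1) → M) :
    ∏ i ∈ s, f i = (if 0 ∈ s then f 0 else 1) * ∏ i : Fin n with i.succ ∈ s, f i.succ := by
  rw [← prod_ite_mem_eq, Fin.prod_univ_succ, prod_filter]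

section

variable {B R : Type*} [Monoid B] [CommRing R] (ε : B →* R) (φ : B → R)

def IsGaussian : Prop :=
  ∀ a b c : B, φ (a * b * c) =
    φ (a * b) * ε c + φ (a * c) * ε b + φ (b * c) * ε a
      - φ a * ε (b * c) - φ b * ε (a * c) - φ c * ε (a * b)

def wickSingles : List B → R
  | [] => 0
  | x :: l => φ x * ε l.prod + ε x * wickSingles l

def wickPairsWith (x : B) : List B → R
  | [] => 0
  | y :: l => φ (x * y) * ε l.prod + ε y * wickPairsWith x l

def wickPairs : List B → R
  | [] => 0
  | x :: l => wickPairsWith ε φ x l + ε x * wickPairs l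

variable {ε φ}

theorem IsGaussian.map_one (hG : IsGaussian ε φ) : φ 1 = 0 := by
  have h := hG 1 1 1
  simp only [mul_one] at h
  linear_combination h

theorem IsGaussian.map_list_prod (hG : IsGaussian ε φ) (l : List B) :
    φ l.prod = wickPairs ε φ l - ((l.length : R) - 2) * wickSingles ε φ l := by
  match l with
  | [] => simp [wickPairs, wickSingles, hG.map_one]
  | [x] =>
    simp only [wickPairs, wickPairsWith, wickSingles, List.prod_singleton, List.prod_nil,
      List.length_singleton, ε.map_one]
    push_cast
    ring
  | x :: y :: l =>
    have ih_x := hG.map_list_prod (x :: l)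
    have ih_y := hG.map_list_prod (y :: l)
    have ih := hG.map_list_prod l
    simp only [List.prod_cons, List.length_cons, wickSingles, wickPairs, wickPairsWith,
      map_mul] at ih_x ih_y ih ⊢
    rw [← mul_assoc, hG x y l.prod, ih_x, ih_y, ih]
    simp only [map_mul]
    push_cast
    ring
termination_by l.length

variable (ε φ)

theorem wickSingles_ofFn {n : ℕ} (a : Fin n → B) :
    wickSingles ε φ (List.ofFn a) = ∑ j, φ (a j) * ∏ i ∈ univ.erase j, ε (a i) := by
  induction n with
  | zero => simp [wickSingles]
  | succ n ih =>
    rw [List.ofFn_succ, wickSingles, ih, map_list_prod, List.map_ofFn, List.prod_ofFn,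
      Fin.sum_univ_succ, mul_sum]
    simp [Fin.prod_finset_succ, (Fin.succ_ne_zero _).symm, filter_ne', mul_left_comm]

theorem wickPairsWith_ofFn (x : B) {n : ℕ} (a : Fin n → B) :
    wickPairsWith ε φ x (List.ofFn a) = ∑ k, φ (x * a k) * ∏ i ∈ univ.erase k, ε (a i) := by
  induction n with
  | zero => simp [wickPairsWith]
  | succ n ih =>
    rw [List.ofFn_succ, wickPairsWith, ih, map_list_prod, List.map_ofFn, List.prod_ofFn,
      Fin.sum_univ_succ, mul_sum]
    simp [Fin.prod_finset_succ, (Fin.succ_ne_zero _).symm, filter_ne', mul_left_comm]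

theorem wickPairs_ofFn {n : ℕ} (a : Fin n → B) :
    wickPairs ε φ (List.ofFn a) = ∑ j, ∑ k, if j < k then
      φ (a j * a k) * ∏ i ∈ (univ.erase j).erase k, ε (a i) else 0 := by
  induction n with
  | zero => simp [wickPairs]
  | succ n ih =>
    rw [List.ofFn_succ, wickPairs, wickPairsWith_ofFn, ih, Fin.sum_univ_succ, mul_sum]
    simp [Fin.sum_univ_succ, Fin.prod_finset_succ, (Fin.succ_ne_zero _).symm, filter_ne',
      filter_and, mul_sum, mul_ite, mul_left_comm]

end

theorem gaussian_wick_formula_general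
    {B : Type*} [Ring B] [Algebra ℂ B]
    (ε : B →ₐ[ℂ] ℂ) (φ : B →ₗ[ℂ] ℂ)
    (hG : ∀ a b c : B, φ (a * b * c) =
      φ (a * b) * ε c + φ (a * c) * ε b + φ (b * c) * ε a
      - φ a * ε (b * c) - φ b * ε (a * c) - φ c * ε (a * b))
    (n : ℕ) (a : Fin n → B) :
    φ (List.ofFn a).prod =
      (∑ j : Fin n, ∑ k : Fin n, if j < k then
          φ (a j * a k) * ∏ i ∈ (Finset.univ.erase j).erase k, ε (a i) else 0)
      - ((n : ℂ) - 2) *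
          ∑ j : Fin n, φ (a j) * ∏ i ∈ Finset.univ.erase j, ε (a i) := by
  have hGauss : IsGaussian (ε : B →* ℂ) φ := hG
  rw [hGauss.map_list_prod, wickPairs_ofFn, wickSingles_ofFn, List.length_ofFn,
    MonoidHom.coe_coe]

/-- Wick-type formula for Gaussian generating functionals
(Proposition `prop:wick` of the paper). -/
theorem gaussian_wick_formula
    {B : Type*} [Ring B] [Algebra ℂ B]
    (ε : B →ₐ[ℂ] ℂ) (φ : B →ₗ[ℂ] ℂ)
    (hG : ∀ a b c : B, φ (a * b * c) =
      φ (a * b) * ε c + φ (a * c) * ε b + φ (b * c) * ε a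
      - φ a * ε (b * c) - φ b * ε (a * c) - φ c * ε (a * b))
    (n : ℕ) (hn : 2 ≤ n) (a : Fin n → B) :
    φ (List.ofFn a).prod =
      (∑ j : Fin n, ∑ k : Fin n, if j < k then
          φ (a j * a k) * ∏ i ∈ (Finset.univ.erase j).erase k, ε (a i) else 0)
      - ((n : ℂ) - 2) *
          ∑ j : Fin n, φ (a j) * ∏ i ∈ Finset.univ.erase j, ε (a i) :=
  gaussian_wick_formula_general ε φ hG n a
end

section
/- Let B be a unital associative ℂ-algebra, ε : B → ℂ a unital ℂ-algebra homomorphism, and φ : B → ℂ a ℂ-linear functional satisfying the Gaussian product identity. Suppose X = {a₁, …, aₙ} ⊆ B generates B as a unital ℂ-algebra and Y = {b₁, …, b_m} ⊆ ker ε is a finite set such that φ(bₖ) = φ(aⱼ·bₖ) = φ(bₖ·aⱼ) = 0 for all j ∈ {1,…,n} and k ∈ {1,…,m}. Then φ vanishes on the two-sided ideal of B generated by Y. -/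
/-- Corollary `cor:wickformula` of the paper: if `φ` is a Gaussian generating
functional, `X = {a 1, …, a n}` generates `B` as a unital algebra,
`Y = {b 1, …, b m} ⊆ ker ε` and `φ` vanishes on the `b k`, `a j * b k` and
`b k * a j`, then `φ` vanishes on the two-sided ideal generated by `Y`
(which is spanned by the elements `x * b k * y` with `x, y ∈ B`). -/
theorem gaussian_vanishes_on_ideal
    {B : Type*} [Ring B] [Algebra ℂ B]
    (ε : B →ₐ[ℂ] ℂ) (φ : B →ₗ[ℂ] ℂ)
    (hG : ∀ a b c : B, φ (a * b * c) =
      φ (a * b) * ε c + φ (a * c) * ε b + φ (b * c) * ε a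
      - φ a * ε (b * c) - φ b * ε (a * c) - φ c * ε (a * b))
    (n m : ℕ) (a : Fin n → B) (b : Fin m → B)
    (hgen : Algebra.adjoin ℂ (Set.range a) = ⊤)
    (hb : ∀ k, ε (b k) = 0)
    (h1 : ∀ k, φ (b k) = 0)
    (h2 : ∀ j k, φ (a j * b k) = 0)
    (h3 : ∀ j k, φ (b k * a j) = 0) :
    ∀ z ∈ Submodule.span ℂ {z : B | ∃ x y : B, ∃ k : Fin m, z = x * b k * y},
      φ z = 0 := by
  -- Step 1: φ (x * b k) = 0 and φ (b k * x) = 0 for all x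
  have key : ∀ x : B, ∀ k, φ (x * b k) = 0 ∧ φ (b k * x) = 0 := by
    intro x
    have hx : x ∈ Algebra.adjoin ℂ (Set.range a) := hgen ▸ Algebra.mem_top
    induction hx using Algebra.adjoin_induction with
    | mem y hy =>
      obtain ⟨j, rfl⟩ := hy
      exact fun k => ⟨h2 j k, h3 j k⟩
    | algebraMap c =>
      intro k
      constructor
      · rw [Algebra.algebraMap_eq_smul_one, smul_mul_assoc, one_mul, map_smul,
          h1 k, smul_zero]
      · rw [Algebra.algebraMap_eq_smul_one, mul_smul_comm, mul_one, map_smul,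
          h1 k, smul_zero]
    | add x y hxmem hymem hx hy =>
      intro k
      constructor
      · rw [add_mul, map_add, (hx k).1, (hy k).1, add_zero]
      · rw [mul_add, map_add, (hx k).2, (hy k).2, add_zero]
    | mul x y hxmem hymem hx hy =>
      intro k
      constructor
      · rw [hG x y (b k)]
        simp [hb k, (hx k).1, (hy k).1, h1 k]
      · rw [(mul_assoc (b k) x y).symm, hG (b k) x y]
        simp [hb k, (hx k).2, (hy k).2, h1 k]
  -- Step 2: φ vanishes on generators x * b k * y
  intro z hz
  induction hz using Submodule.span_induction with
  | mem w hw =>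
    obtain ⟨x, y, k, rfl⟩ := hw
    rw [hG x (b k) y]
    simp [hb k, (key x k).1, (key y k).2, h1 k]
  | zero => simp
  | add u v _ _ hu hv => rw [map_add, hu, hv, add_zero]
  | smul c u _ hu => rw [map_smul, hu, smul_zero]
end

section
/- Let B be a unital associative ℂ-algebra and ε : B → ℂ a unital ℂ-algebra homomorphism. For a ℂ-linear functional φ : B → ℂ, the following are equivalent: (i) φ(1) = 0 and φ vanishes on K₃ (the span of products of three elements of ker ε); (ii) φ satisfies the Gaussian product identity φ(abc) = φ(ab)ε(c) + φ(ac)ε(b) + φ(bc)ε(a) − φ(a)ε(bc) − φ(b)ε(ac) − φ(c)ε(ab) for all a,b,c ∈ B. -/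
/-- A linear functional `φ` is normalized and vanishes on
`K₃ = (ker ε)³` if and only if it satisfies the Gaussian product identity. -/
theorem gaussian_iff_vanishes_on_K3
    {B : Type*} [Ring B] [Algebra ℂ B]
    (ε : B →ₐ[ℂ] ℂ) (φ : B →ₗ[ℂ] ℂ) :
    (φ 1 = 0 ∧ ∀ x ∈ (LinearMap.ker ε.toLinearMap) ^ 3, φ x = 0) ↔
    (∀ a b c : B, φ (a * b * c) =
      φ (a * b) * ε c + φ (a * c) * ε b + φ (b * c) * ε a
      - φ a * ε (b * c) - φ b * ε (a * c) - φ c * ε (a * b)) := by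
  set K := LinearMap.ker ε.toLinearMap with hK
  have hpow : K ^ 3 = K * K * K := by
    rw [pow_succ, pow_succ, pow_one]
  constructor
  · rintro ⟨h1, h3⟩ a b c
    have mem : ∀ x : B, x - ε x • 1 ∈ K := by
      intro x
      simp [hK, LinearMap.mem_ker, Algebra.algebraMap_eq_smul_one]
    have key : φ ((a - ε a • 1) * (b - ε b • 1) * (c - ε c • 1)) = 0 := by
      apply h3
      rw [hpow]
      exact Submodule.mul_mem_mul (Submodule.mul_mem_mul (mem a) (mem b)) (mem c)
    simp only [mul_sub, sub_mul, smul_mul_assoc, mul_smul_comm, one_mul, mul_one,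
      map_sub, map_smul, smul_eq_mul, h1, mul_zero] at key
    simp only [map_mul]
    linear_combination key
  · intro h
    have h1 : φ 1 = 0 := by
      have := h 1 1 1
      simpa using this
    refine ⟨h1, ?_⟩
    intro x hx
    rw [hpow] at hx
    have hker : ∀ x ∈ K, ε x = 0 := fun x hx => hx
    refine Submodule.mul_induction_on hx ?_ ?_
    · intro m hm c hc
      refine Submodule.mul_induction_on hm ?_ ?_
      · intro a ha b hb
        rw [h a b c]
        simp [map_mul, hker a ha, hker b hb, hker c hc]
      · intro m n hmc hnc
        rw [add_mul, map_add, hmc, hnc, add_zero]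
    · intro m n hm hn
      rw [map_add, hm, hn, add_zero]
end

section
/- Let B be a unital associative ℂ-algebra, ε : B → ℂ a unital ℂ-algebra homomorphism, H a ℂ-vector space, ρ : B → End_ℂ(H) a unital ℂ-algebra homomorphism, and η : B → H a surjective ℂ-linear map satisfying the cocycle relation η(ab) = ρ(a)(η(b)) + ε(b)·η(a) for all a,b ∈ B. Then the following are equivalent: (i) η vanishes on K₂ (the span of products of two elements of ker ε); (ii) η(ab) = ε(a)·η(b) + ε(b)·η(a) for all a,b ∈ B; (iii) ρ(b) = ε(b)·id_H for all b ∈ B. -/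
/-- Characterization of Gaussian cocycles (part of Proposition `prop-gauss`):
for a surjective `ε`-cocycle `η` with structure map `ρ`, vanishing on `K₂`,
being an `ε`-derivation, and triviality of `ρ` are equivalent. -/
theorem gaussian_cocycle_tfae
    {B H : Type*} [Ring B] [Algebra ℂ B]
    [AddCommGroup H] [Module ℂ H]
    (ε : B →ₐ[ℂ] ℂ) (ρ : B →ₐ[ℂ] Module.End ℂ H) (η : B →ₗ[ℂ] H)
    (hsurj : Function.Surjective η)
    (hcocycle : ∀ a b : B, η (a * b) = ρ a (η b) + ε b • η a) :
    List.TFAE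
      [ (∀ x ∈ (LinearMap.ker ε.toLinearMap) ^ 2, η x = 0),
        (∀ a b : B, η (a * b) = ε a • η b + ε b • η a),
        (∀ b : B, ρ b = ε b • (LinearMap.id : H →ₗ[ℂ] H)) ] := by
  have hη1 : η (1 : B) = 0 := by
    have h := hcocycle 1 1
    simp only [mul_one, map_one, Module.End.one_apply, one_smul] at h
    exact (left_eq_add.mp h)
  tfae_have 3 → 2 := by
    intro h3 a b
    rw [hcocycle a b, h3 a]
    simp
  tfae_have 2 → 1 := by
    intro h2 x hx
    rw [pow_two] at hx
    refine Submodule.mul_induction_on hx ?_ ?_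
    · intro m hm n hn
      rw [LinearMap.mem_ker] at hm hn
      have hm' : ε m = 0 := hm
      have hn' : ε n = 0 := hn
      rw [h2 m n, hm', hn', zero_smul, zero_smul, add_zero]
    · intro x y hx' hy'
      rw [map_add, hx', hy', add_zero]
  tfae_have 1 → 3 := by
    intro h1 b
    ext h
    obtain ⟨c, rfl⟩ := hsurj h
    set β := ε b with hβ
    set γ := ε c with hγ
    have hbk : b - β • (1 : B) ∈ LinearMap.ker ε.toLinearMap := by
      simp [LinearMap.mem_ker, hβ]
    have hck : c - γ • (1 : B) ∈ LinearMap.ker ε.toLinearMap := by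
      simp [LinearMap.mem_ker, hγ]
    have hmem : (b - β • (1 : B)) * (c - γ • (1 : B)) ∈
        (LinearMap.ker ε.toLinearMap) ^ 2 := by
      rw [pow_two]
      exact Submodule.mul_mem_mul hbk hck
    have h0 := h1 _ hmem
    have expand : b * c = (b - β • (1 : B)) * (c - γ • (1 : B))
        + γ • (b - β • (1 : B)) + β • (c - γ • (1 : B)) + (β * γ) • (1 : B) := by
      simp only [mul_sub, sub_mul, smul_sub, mul_smul_comm, smul_mul_assoc,
        smul_smul, mul_one, one_mul]
      module
    have hbc : η (b * c) = β • η c + γ • η b := by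
      rw [expand]
      simp only [map_add, map_smul, map_sub, h0, hη1, smul_zero, sub_zero,
        smul_sub, zero_add]
      abel
    have := hcocycle b c
    rw [hbc] at this
    have : ρ b (η c) = β • η c := by
      have h' : β • η c + γ • η b = ρ b (η c) + γ • η b := this
      exact (add_right_cancel h'.symm)
    simpa using this
  tfae_finish
end

section
/- Let B be a unital ℂ-algebra with an involution * (a *-algebra), ε : B → ℂ a unital *-homomorphism (so ε(b*) = conj(ε(b))), H a complex inner product space, η : B → H a ℂ-linear map, and φ : B → ℂ a ℂ-linear functional satisfying the coboundary relation φ(a*·b) − conj(ε(a))·φ(b) − conj(φ(a))·ε(b) = ⟨η(a), η(b)⟩ for all a,b ∈ B. Then φ vanishes on K₃ (the span of products of three elements of ker ε) if and only if φ(a*·a) = 0 for all a ∈ K₂ (the span of products of two elements of ker ε). -/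
/-!
On `ker ε` the coboundary relation reads `φ (a⋆ * b) = ⟪η a, η b⟫`, so `φ (a⋆ * a) = ‖η a‖²` and the
right-hand side says exactly that `η` vanishes on `K₂`. Then `φ` vanishes on the spanning products
`m * n = (m⋆)⋆ * n` of `K₃ = K₂ * K₁`, since `m⋆ ∈ K₂`. Conversely `a⋆ * a ∈ K₁ * K₂ = K₃` for `a ∈ K₂`.
-/

section StarClosed

variable {R A : Type*} [CommSemiring R] [Semiring A] [Algebra R A] [StarRing A]

theorem Submodule.star_mem_mul {M N : Submodule R A} (hM : ∀ x ∈ M, star x ∈ M)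
    (hN : ∀ x ∈ N, star x ∈ N) {x : A} (hx : x ∈ M * N) : star x ∈ N * M := by
  refine Submodule.mul_induction_on hx (fun m hm n hn => ?_) (fun x y hx hy => ?_)
  · rw [star_mul]
    exact Submodule.mul_mem_mul (hN n hn) (hM m hm)
  · rw [star_add]
    exact add_mem hx hy

end StarClosed

namespace AlgHom

variable {R A S : Type*} [CommSemiring R] [Semiring A] [Semiring S] [Algebra R A] [Algebra R S]

theorem mul_ker_le_ker (f : A →ₐ[R] S) (M : Submodule R A) :
    M * LinearMap.ker f.toLinearMap ≤ LinearMap.ker f.toLinearMap :=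
  Submodule.mul_le.2 fun _ _ _ hn => by simp_all

theorem star_mem_ker [StarRing A] [StarRing S] (f : A →ₐ[R] S)
    (hf : ∀ b, f (star b) = star (f b)) {x : A} (hx : x ∈ LinearMap.ker f.toLinearMap) :
    star x ∈ LinearMap.ker f.toLinearMap := by
  simp_all

end AlgHom

section Coboundary

variable {𝕜 B H : Type*} [RCLike 𝕜] [Ring B] [Algebra 𝕜 B] [StarRing B]
  [NormedAddCommGroup H] [InnerProductSpace 𝕜 H]
  {ε : B →ₐ[𝕜] 𝕜} {η : B →ₗ[𝕜] H} {φ : B →ₗ[𝕜] 𝕜}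

theorem apply_star_mul_eq_inner_of_mem_ker
    (hcobound : ∀ a b : B,
      φ (star a * b) - starRingEnd 𝕜 (ε a) * φ b - starRingEnd 𝕜 (φ a) * ε b
        = inner 𝕜 (η a) (η b))
    {a b : B} (ha : ε a = 0) (hb : ε b = 0) : φ (star a * b) = inner 𝕜 (η a) (η b) := by
  simpa [ha, hb] using hcobound a b

theorem apply_star_mul_self_eq_zero_iff
    (hcobound : ∀ a b : B,
      φ (star a * b) - starRingEnd 𝕜 (ε a) * φ b - starRingEnd 𝕜 (φ a) * ε b
        = inner 𝕜 (η a) (η b))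
    {a : B} (ha : ε a = 0) : φ (star a * a) = 0 ↔ η a = 0 := by
  rw [apply_star_mul_eq_inner_of_mem_ker hcobound ha ha, inner_self_eq_zero]

end Coboundary

theorem gaussian_iff_vanishes_on_star_sq_K2_general
    {B H : Type*} [Ring B] [Algebra ℂ B] [StarRing B]
    [NormedAddCommGroup H] [InnerProductSpace ℂ H]
    (ε : B →ₐ[ℂ] ℂ) (hεstar : ∀ b : B, ε (star b) = starRingEnd ℂ (ε b))
    (η : B →ₗ[ℂ] H) (φ : B →ₗ[ℂ] ℂ)
    (hcobound : ∀ a b : B,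
      φ (star a * b) - starRingEnd ℂ (ε a) * φ b - starRingEnd ℂ (φ a) * ε b
        = (inner ℂ (η a) (η b) : ℂ)) :
    (∀ x ∈ (LinearMap.ker ε.toLinearMap) ^ 3, φ x = 0) ↔
    (∀ a ∈ (LinearMap.ker ε.toLinearMap) ^ 2, φ (star a * a) = 0) := by
  set K := LinearMap.ker ε.toLinearMap
  have hstarK : ∀ x ∈ K, star x ∈ K := fun _ => ε.star_mem_ker hεstar
  have hK2 : K ^ 2 ≤ K := pow_two K ▸ ε.mul_ker_le_ker K
  have hstarK2 : ∀ x ∈ K ^ 2, star x ∈ K ^ 2 :=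
    pow_two K ▸ fun _ => Submodule.star_mem_mul hstarK hstarK
  constructor
  · intro h a ha
    exact h _ (pow_succ' K 2 ▸ Submodule.mul_mem_mul (hstarK a (hK2 ha)) ha)
  · intro h
    have hη : ∀ y ∈ K ^ 2, η y = 0 := fun y hy =>
      (apply_star_mul_self_eq_zero_iff hcobound (hK2 hy)).1 (h y hy)
    suffices K ^ 2 * K ≤ LinearMap.ker φ from fun x hx => this hx
    refine Submodule.mul_le.2 fun m hm n hn => ?_
    rw [LinearMap.mem_ker, ← star_star m,
      apply_star_mul_eq_inner_of_mem_ker hcobound (hK2 (hstarK2 m hm)) hn, hη _ (hstarK2 m hm),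
      inner_zero_left]

/-- Characterization of Gaussian functionals via the coboundary relation:
`φ` vanishes on `K₃ = (ker ε)³` iff `φ (a* · a) = 0` for all `a ∈ K₂`. -/
theorem gaussian_iff_vanishes_on_star_sq_K2
    {B H : Type*} [Ring B] [Algebra ℂ B] [StarRing B] [StarModule ℂ B]
    [NormedAddCommGroup H] [InnerProductSpace ℂ H]
    (ε : B →ₐ[ℂ] ℂ) (hεstar : ∀ b : B, ε (star b) = starRingEnd ℂ (ε b))
    (η : B →ₗ[ℂ] H) (φ : B →ₗ[ℂ] ℂ)
    (hcobound : ∀ a b : B,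
      φ (star a * b) - starRingEnd ℂ (ε a) * φ b - starRingEnd ℂ (φ a) * ε b
        = (inner ℂ (η a) (η b) : ℂ)) :
    (∀ x ∈ (LinearMap.ker ε.toLinearMap) ^ 3, φ x = 0) ↔
    (∀ a ∈ (LinearMap.ker ε.toLinearMap) ^ 2, φ (star a * a) = 0) :=
  gaussian_iff_vanishes_on_star_sq_K2_general ε hεstar η φ hcobound
end

section
/- Let A be a bialgebra over a field k with comultiplication Δ and counit ε. Set K₀ = A, K₁ = ker ε, and Kₙ = K₁ⁿ for n ≥ 1. Then for every n ≥ 1, Δ(Kₙ) ⊆ Σ_{ℓ=0}^{n} K_ℓ ⊗ K_{n−ℓ} (as subspaces of A⊗A); consequently Δ(Kₙ) ⊆ K_{⌊n/2⌋} ⊗ A + A ⊗ K_{⌊n/2⌋}. -/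
/-! For `ε x = 0` one has `Δ x = 1 ⊗ x + ((id - η ∘ ε) ⊗ id)(Δ x) ∈ A ⊗ K₁ + K₁ ⊗ A`, so `Δ(K₁)`
lies in degree `1` of the filtration `Tₙ = Σ_ℓ K_ℓ ⊗ K_{n-ℓ}` of `A ⊗ A`. Since `K_a K_b ⊆ K_{a+b}`,
this filtration is multiplicative, and as `Δ` is an algebra map, `Δ(K₁ⁿ) ⊆ T₁ⁿ ⊆ Tₙ`. The second
claim follows because the `K_ℓ` decrease and every summand has `ℓ ≥ ⌊n/2⌋` or `n - ℓ ≥ ⌊n/2⌋`. -/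

open TensorProduct Submodule

section TensorFiltration

variable {k A : Type*} [CommSemiring k] [Semiring A] [Algebra k A]

theorem Submodule.map₂_mk_mul_map₂_mk_le {B : Type*} [Semiring B] [Algebra k B]
    (P R : Submodule k A) (Q S : Submodule k B) :
    map₂ (TensorProduct.mk k A B) P Q * map₂ (TensorProduct.mk k A B) R S ≤
      map₂ (TensorProduct.mk k A B) (P * R) (Q * S) := by
  rw [map₂_eq_span_image2, map₂_eq_span_image2, span_mul_span, map₂_eq_span_image2]
  refine span_le.mpr ?_
  rintro _ ⟨_, ⟨p, hp, q, hq, rfl⟩, _, ⟨r, hr, s, hs, rfl⟩, rfl⟩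
  exact subset_span ⟨p * r, mul_mem_mul hp hr, q * s, mul_mem_mul hq hs,
    (Algebra.TensorProduct.tmul_mul_tmul p r q s).symm⟩

theorem Submodule.sum_le {M ι : Type*} [AddCommMonoid M] [Module k M] {s : Finset ι}
    {f : ι → Submodule k M} {N : Submodule k M} (h : ∀ i ∈ s, f i ≤ N) : ∑ i ∈ s, f i ≤ N :=
  Finset.sum_induction f (· ≤ N)
    (fun _ _ ha hb => (Submodule.add_eq_sup _ _).trans_le (sup_le ha hb)) bot_le h

variable (F : ℕ → Submodule k A)

noncomputable def tensorFiltration (n : ℕ) : Submodule k (A ⊗[k] A) :=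
  ∑ ℓ ∈ Finset.range (n + 1), map₂ (TensorProduct.mk k A A) (F ℓ) (F (n - ℓ))

theorem map₂_le_tensorFiltration {n ℓ : ℕ} (hℓ : ℓ ≤ n) :
    map₂ (TensorProduct.mk k A A) (F ℓ) (F (n - ℓ)) ≤ tensorFiltration F n :=
  Finset.single_le_sum_of_canonicallyOrdered
    (f := fun ℓ => map₂ (TensorProduct.mk k A A) (F ℓ) (F (n - ℓ)))
    (Finset.mem_range_succ_iff.mpr hℓ)

theorem tensorFiltration_zero :
    tensorFiltration F 0 = map₂ (TensorProduct.mk k A A) (F 0) (F 0) := by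
  simp [tensorFiltration]

theorem tensorFiltration_one :
    tensorFiltration F 1 =
      map₂ (TensorProduct.mk k A A) (F 0) (F 1) ⊔ map₂ (TensorProduct.mk k A A) (F 1) (F 0) := by
  simp [tensorFiltration, Finset.sum_range_succ, Submodule.add_eq_sup]

theorem tensorFiltration_mul_le (hF : ∀ i j, F i * F j ≤ F (i + j)) (m n : ℕ) :
    tensorFiltration F m * tensorFiltration F n ≤ tensorFiltration F (m + n) := by
  rw [tensorFiltration, tensorFiltration, Finset.sum_mul_sum]
  refine sum_le fun i hi => sum_le fun j hj => ?_
  rw [Finset.mem_range_succ_iff] at hi hj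
  have hsplit : m - i + (n - j) = m + n - (i + j) := by omega
  calc map₂ (TensorProduct.mk k A A) (F i) (F (m - i)) *
        map₂ (TensorProduct.mk k A A) (F j) (F (n - j))
      ≤ map₂ (TensorProduct.mk k A A) (F i * F j) (F (m - i) * F (n - j)) :=
      map₂_mk_mul_map₂_mk_le ..
    _ ≤ map₂ (TensorProduct.mk k A A) (F (i + j)) (F (m + n - (i + j))) :=
      map₂_le_map₂ (hF i j) (hsplit ▸ hF _ _)
    _ ≤ tensorFiltration F (m + n) := map₂_le_tensorFiltration F (by omega)

theorem tensorFiltration_le_sup (hF : Antitone F) {n a b : ℕ} (hab : a + b ≤ n + 1) :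
    tensorFiltration F n ≤
      map₂ (TensorProduct.mk k A A) (F a) ⊤ ⊔ map₂ (TensorProduct.mk k A A) ⊤ (F b) := by
  refine sum_le fun ℓ _ => ?_
  rcases le_or_gt a ℓ with h | h
  · exact le_sup_of_le_left (map₂_le_map₂ (hF h) le_top)
  · exact le_sup_of_le_right (map₂_le_map₂ le_top (hF (by omega)))

end TensorFiltration

section Augmentation

variable {k A : Type*} [CommRing k] [Ring A] [Bialgebra k A]

local notation "ε" => (Coalgebra.counit : A →ₗ[k] k)
local notation "Δ" => (Coalgebra.comul : A →ₗ[k] A ⊗[k] A)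

theorem top_mul_ker_counit_le : ⊤ * LinearMap.ker ε ≤ LinearMap.ker ε :=
  mul_le.mpr fun a _ x hx => by simp [LinearMap.mem_ker.mp hx]

theorem ker_counit_mul_top_le : LinearMap.ker ε * ⊤ ≤ LinearMap.ker ε :=
  mul_le.mpr fun x hx a _ => by simp [LinearMap.mem_ker.mp hx]

theorem comul_eq_one_tmul_add_rTensor (x : A) :
    Δ x = 1 ⊗ₜ x + (LinearMap.id - Algebra.linearMap k A ∘ₗ ε).rTensor A (Δ x) := by
  rw [LinearMap.rTensor_sub, LinearMap.rTensor_comp, LinearMap.sub_apply, LinearMap.comp_apply,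
    Coalgebra.rTensor_counit_comul, LinearMap.rTensor_tmul, Algebra.linearMap_apply, map_one,
    LinearMap.rTensor_id, LinearMap.id_apply, add_sub_cancel]

theorem map_comul_ker_counit_le :
    map Δ (LinearMap.ker ε) ≤
      map₂ (TensorProduct.mk k A A) ⊤ (LinearMap.ker ε) ⊔
        map₂ (TensorProduct.mk k A A) (LinearMap.ker ε) ⊤ := by
  set φ := LinearMap.id - Algebra.linearMap k A ∘ₗ ε
  have hφ : LinearMap.range φ ≤ LinearMap.ker ε := by
    rintro _ ⟨a, rfl⟩
    simp [φ, Algebra.algebraMap_eq_smul_one]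
  have hrange :
      LinearMap.range (φ.rTensor A) ≤ map₂ (TensorProduct.mk k A A) (LinearMap.ker ε) ⊤ := by
    rw [LinearMap.rTensor, TensorProduct.range_map, LinearMap.range_id]
    exact map₂_le_map₂_left hφ
  rintro _ ⟨x, hx, rfl⟩
  rw [comul_eq_one_tmul_add_rTensor x]
  exact add_mem (mem_sup_left (apply_mem_map₂ _ trivial hx))
    (mem_sup_right (hrange ⟨_, rfl⟩))

-- In Mathlib `(ker ε) ^ 0 = 1` is the span of `1`, not `⊤`.
variable (k A) in
noncomputable def augmentationPow : ℕ → Submodule k A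
  | 0 => ⊤
  | n + 1 => LinearMap.ker (Coalgebra.counit : A →ₗ[k] k) ^ (n + 1)

local notation "F" => augmentationPow k A

theorem augmentationPow_succ (n : ℕ) : F (n + 1) = LinearMap.ker ε ^ (n + 1) := rfl

theorem augmentationPow_one : F 1 = LinearMap.ker ε := pow_one _

theorem augmentationPow_mul_le (a b : ℕ) : F a * F b ≤ F (a + b) := by
  rcases a with _ | a <;> rcases b with _ | b
  · exact le_top
  · rw [zero_add, augmentationPow_succ, pow_succ', ← mul_assoc]
    exact mul_le_mul_left top_mul_ker_counit_le _
  · rw [add_zero, augmentationPow_succ, pow_succ, mul_assoc]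
    exact mul_le_mul_right ker_counit_mul_top_le _
  · exact (pow_add _ _ _).ge

theorem augmentationPow_antitone : Antitone (augmentationPow k A) := by
  refine antitone_nat_of_succ_le fun n => ?_
  rcases n with _ | n
  · exact le_top
  · calc F (n + 2) = F (n + 1) * F 1 := by rw [augmentationPow_one]; exact pow_succ _ _
      _ ≤ F (n + 1) * F 0 := mul_le_mul_right le_top _
      _ ≤ F (n + 1) := augmentationPow_mul_le _ 0

theorem augmentationPow_succ_le (n : ℕ) : F (n + 1) ≤ F 1 * F n := by
  rcases n with _ | n
  · exact (mul_one (F 1)).ge.trans (mul_le_mul_right le_top _)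
  · rw [augmentationPow_one]; exact (pow_succ' _ _).le

theorem map_comul_augmentationPow_le (n : ℕ) : map Δ (F n) ≤ tensorFiltration F n := by
  induction n with
  | zero => simp [tensorFiltration_zero, augmentationPow]
  | succ n ih =>
    have hone : map Δ (F 1) ≤ tensorFiltration F 1 := by
      rw [tensorFiltration_one, augmentationPow_one]
      exact map_comul_ker_counit_le
    calc map Δ (F (n + 1)) ≤ map Δ (F 1 * F n) := map_mono (augmentationPow_succ_le n)
      _ = map Δ (F 1) * map Δ (F n) := Submodule.map_mul _ _ (Bialgebra.comulAlgHom k A)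
      _ ≤ tensorFiltration F 1 * tensorFiltration F n := mul_le_mul' hone ih
      _ ≤ tensorFiltration F (1 + n) := tensorFiltration_mul_le _ augmentationPow_mul_le 1 n
      _ = tensorFiltration F (n + 1) := by rw [add_comm]

end Augmentation

/-- The filtration property of the powers of the augmentation ideal of a
bialgebra: `Δ(Kₙ) ⊆ Σ_{ℓ=0}^{n} K_ℓ ⊗ K_{n−ℓ}`, and consequently
`Δ(Kₙ) ⊆ K_{⌊n/2⌋} ⊗ A + A ⊗ K_{⌊n/2⌋}`. -/
theorem comul_augmentation_filtration
    {k A : Type*} [Field k] [Ring A] [Bialgebra k A]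
    (K : ℕ → Submodule k A)
    (hK0 : K 0 = ⊤)
    (hK : ∀ n : ℕ, 1 ≤ n →
      K n = (LinearMap.ker (Coalgebra.counit : A →ₗ[k] k)) ^ n) :
    ∀ n : ℕ, 1 ≤ n → ∀ x ∈ K n,
      ((Coalgebra.comul : A →ₗ[k] A ⊗[k] A) x ∈
        ∑ ℓ ∈ Finset.range (n + 1),
          Submodule.map₂ (TensorProduct.mk k A A) (K ℓ) (K (n - ℓ))) ∧
      ((Coalgebra.comul : A →ₗ[k] A ⊗[k] A) x ∈
        Submodule.map₂ (TensorProduct.mk k A A) (K (n / 2)) ⊤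
          ⊔ Submodule.map₂ (TensorProduct.mk k A A) ⊤ (K (n / 2))) := by
  obtain rfl : K = augmentationPow k A := by
    funext n
    rcases n with _ | n
    · exact hK0
    · exact hK _ n.succ_pos
  intro n _ x hx
  have hΔ := map_comul_augmentationPow_le n (mem_map_of_mem hx)
  exact ⟨hΔ, tensorFiltration_le_sup _ augmentationPow_antitone (by omega) hΔ⟩
end

section
/- Let B be a unital ℂ-*-algebra and ε : B → ℂ a unital *-algebra homomorphism. Suppose B is generated as a unital ℂ-algebra by a set P of projections (elements p with p* = p and p² = p). Then Kₙ = K₁ for all n ≥ 1; in particular K_∞ = K₁ (ker ε equals the intersection of all its powers). -/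
/-- Proposition `prop:projections` of the paper: if a unital `*`-algebra with a
character `ε` is generated by projections, then all powers of the augmentation
ideal coincide with it; in particular `K_∞ = K₁`. -/
theorem generated_by_projections_Kinf_eq_K1
    {B : Type*} [Ring B] [Algebra ℂ B] [StarRing B] [StarModule ℂ B]
    (ε : B →ₐ[ℂ] ℂ)
    (P : Set B) (hP : ∀ p ∈ P, star p = p ∧ p * p = p)
    (hgen : Algebra.adjoin ℂ P = ⊤) :
    (∀ n : ℕ, 1 ≤ n →
      (LinearMap.ker ε.toLinearMap) ^ n = LinearMap.ker ε.toLinearMap) ∧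
    (⨅ n : ℕ, (LinearMap.ker ε.toLinearMap) ^ (n + 1)) = LinearMap.ker ε.toLinearMap := by
  set K := LinearMap.ker ε.toLinearMap with hKdef
  have hmem : ∀ x : B, x ∈ K ↔ ε x = 0 := fun x => LinearMap.mem_ker
  have hcen : ∀ x : B, x - ε x • 1 ∈ K := by
    intro x
    rw [hmem]
    simp [map_sub, map_smul]
  have hmul_le : K * K ≤ K := by
    refine Submodule.mul_le.2 fun a ha b hb => ?_
    rw [hmem] at *
    simp [map_mul, ha, hb]
  have key : ∀ x : B, x - ε x • 1 ∈ K * K := by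
    intro x
    have hx : x ∈ Algebra.adjoin ℂ P := hgen ▸ Algebra.mem_top
    induction hx using Algebra.adjoin_induction with
    | mem p hp =>
      obtain ⟨-, hp2⟩ := hP p hp
      have hc : ε p * ε p = ε p := by rw [← map_mul, hp2]
      have hc01 : ε p = 0 ∨ ε p = 1 := by
        rcases mul_eq_zero.1 (show ε p * (ε p - 1) = 0 by ring_nf; linear_combination hc) with h | h
        · exact Or.inl h
        · exact Or.inr (by linear_combination h)
      set q := p - ε p • 1 with hq
      have hqK : q ∈ K := hcen p
      rcases hc01 with h | h
      · have : q = q * q := by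
          rw [hq, h]; simp [sub_mul, mul_sub, hp2]
        rw [this]
        exact Submodule.mul_mem_mul hqK hqK
      · have hqq : q * q = -q := by
          rw [hq, h, one_smul, sub_mul, mul_sub, mul_sub, hp2, mul_one, one_mul, mul_one]
          abel
        rw [show q = -(q * q) by rw [hqq, neg_neg]]
        exact neg_mem (Submodule.mul_mem_mul hqK hqK)
    | algebraMap r =>
      have : (algebraMap ℂ B) r - ε ((algebraMap ℂ B) r) • 1 = 0 := by
        simp [Algebra.algebraMap_eq_smul_one]
      rw [this]; exact zero_mem _
    | add x y hx hy ihx ihy =>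
      have : x + y - ε (x + y) • 1 = (x - ε x • 1) + (y - ε y • 1) := by
        rw [map_add]; module
      rw [this]; exact add_mem ihx ihy
    | mul x y hx hy ihx ihy =>
      have : x * y - ε (x * y) • 1
          = (x - ε x • 1) * (y - ε y • 1) + ε x • (y - ε y • 1) + ε y • (x - ε x • 1) := by
        rw [map_mul]
        simp only [sub_mul, mul_sub, smul_sub, smul_mul_assoc, mul_smul_comm,
          smul_smul, mul_one, one_mul]
        module
      rw [this]
      exact add_mem (add_mem (Submodule.mul_mem_mul (hcen x) (hcen y))
        (Submodule.smul_mem _ _ ihy)) (Submodule.smul_mem _ _ ihx)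
  have hle : K ≤ K * K := by
    intro x hx
    have h0 : ε x = 0 := (hmem x).1 hx
    have := key x
    rwa [h0, zero_smul, sub_zero] at this
  have hK2 : K * K = K := le_antisymm hmul_le hle
  have hpow : ∀ n : ℕ, 1 ≤ n → K ^ n = K := by
    intro n hn
    induction n with
    | zero => omega
    | succ m ih =>
      rcases Nat.eq_or_lt_of_le hn with h | h
      · simp [← h]
      · have hm : 1 ≤ m := by omega
        rw [pow_succ, ih hm, hK2]
  refine ⟨hpow, le_antisymm ?_ (le_iInf fun n => (hpow (n + 1) (by omega)).ge)⟩
  calc (⨅ n : ℕ, K ^ (n + 1)) ≤ K ^ 1 := iInf_le _ 0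
    _ = K := pow_one K
end

section
/- Let Γ be a group, ℂ[Γ] its group algebra, and ε : ℂ[Γ] → ℂ the augmentation homomorphism. The following are equivalent: (i) K_∞ = K₁, i.e. the intersection ⋂_{n≥1} (ker ε)ⁿ equals ker ε; (ii) K₂ = K₁, i.e. (ker ε)² = ker ε; (iii) the abelianization of Γ is a torsion group (every element of Γ/[Γ,Γ] has finite order). -/
/-!
Write `K = ker ε`. It is spanned by the elements `g - 1`, and since
`gh - 1 = (g - 1) + (h - 1) + (g - 1)(h - 1)`, the map `g ↦ g - 1 mod K²` is a homomorphism from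
`Γ` to an additive group, which factors through `Γᵃᵇ`. Hence `K² = K` (equivalently `⋂ Kⁿ = K`)
iff every `g - 1` lies in `K²`. If the class of `g` in `Γᵃᵇ` has finite order `n`, then
`n (g - 1) ∈ K²`, and `n` is invertible in `ℂ`. If it has infinite order, there is a character
`χ : Γᵃᵇ → ℚ` with `χ g = 1`, as `ℚ` is an injective abelian group; then `g ↦ 1 + χ(g) ε` extends
to an algebra map `ℂ[Γ] → ℂ[ε]/(ε²)` which sends `K` into `ℂε`, so kills `K²` but not `g - 1`.
-/

open MonoidAlgebra

theorem Submodule.iInf_pow_succ_eq_self_iff {R A : Type*} [CommSemiring R] [Semiring A]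
    [Algebra R A] (I : Submodule R A) (hI : I * I ≤ I) :
    ⨅ n : ℕ, I ^ (n + 1) = I ↔ I ^ 2 = I := by
  constructor
  · intro h
    refine le_antisymm (by rwa [pow_two]) ?_
    calc I = ⨅ n : ℕ, I ^ (n + 1) := h.symm
      _ ≤ I ^ 2 := iInf_le _ 1
  · intro h
    have hpow : ∀ n : ℕ, I ^ (n + 1) = I := by
      intro n
      induction n with
      | zero => exact pow_one I
      | succ n ih => rw [pow_succ, ih, ← pow_two, h]
    simp only [hpow, iInf_const]

theorem AlgHom.ker_mul_ker_le {R A B : Type*} [CommSemiring R] [Semiring A] [Semiring B]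
    [Algebra R A] [Algebra R B] (f : A →ₐ[R] B) :
    LinearMap.ker f.toLinearMap * LinearMap.ker f.toLinearMap ≤ LinearMap.ker f.toLinearMap :=
  Submodule.mul_le.mpr fun a ha b _ => by simp_all [LinearMap.mem_ker]

theorem exists_addMonoidHom_rat_eq_one_of_not_isOfFinAddOrder {A : Type*} [AddCommGroup A]
    {a : A} (ha : ¬IsOfFinAddOrder a) : ∃ f : A →+ ℚ, f a = 1 := by
  obtain ⟨f, hf⟩ := (Module.Baer.of_divisible ℚ).extension_property_addMonoidHom
    (zmultiplesHom A a) (injective_zsmul_iff_not_isOfFinAddOrder.mpr ha) (Int.castAddHom ℚ)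
  exact ⟨f, by simpa using DFunLike.congr_fun hf 1⟩

theorem Abelianization.of_surjective {G : Type*} [Group G] :
    Function.Surjective (Abelianization.of : G → Abelianization G) :=
  QuotientGroup.mk'_surjective _

section DualNumber

variable {k G : Type*} [CommSemiring k] [Monoid G]

noncomputable def dualNumberHom (χ : Additive G →+ k) : G →* DualNumber k where
  toFun g := 1 + TrivSqZeroExt.inr (χ (.ofMul g))
  map_one' := by simp
  map_mul' g h := by
    simp only [ofMul_mul, map_add, TrivSqZeroExt.inr_add, add_mul, mul_add, mul_one, one_mul,
      TrivSqZeroExt.inr_mul_inr]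
    abel

theorem dualNumberHom_apply (χ : Additive G →+ k) (g : G) :
    dualNumberHom χ g = 1 + TrivSqZeroExt.inr (χ (.ofMul g)) :=
  rfl

end DualNumber

namespace MonoidAlgebra

section Augmentation

variable {k G : Type*} [CommRing k] [Monoid G] {ε : MonoidAlgebra k G →ₐ[k] k}

theorem of_sub_one_mem_ker (hε : ∀ g, ε (of k G g) = 1) (g : G) :
    of k G g - 1 ∈ LinearMap.ker ε.toLinearMap := by
  simp only [LinearMap.mem_ker, AlgHom.toLinearMap_apply, map_sub, map_one, hε, sub_self]

theorem ker_eq_span_of_sub_one (hε : ∀ g, ε (of k G g) = 1) :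
    LinearMap.ker ε.toLinearMap = Submodule.span k (Set.range fun g => of k G g - 1) := by
  refine le_antisymm (fun x hx => ?_)
    (Submodule.span_le.mpr <| Set.range_subset_iff.mpr (of_sub_one_mem_ker hε))
  have hspan : ∀ y, y - ε y • 1 ∈ Submodule.span k (Set.range fun g => of k G g - 1) := by
    intro y
    induction y using MonoidAlgebra.induction_linear with
    | zero => simp
    | add p q hp hq => convert add_mem hp hq using 1; simp only [map_add, add_smul]; abel
    | single g c =>
      have hsingle : single g c = c • of k G g := by simp
      rw [hsingle, map_smul, hε, smul_eq_mul, mul_one, ← smul_sub]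
      exact Submodule.smul_mem _ c (Submodule.subset_span ⟨g, rfl⟩)
  have hx : ε x = 0 := hx
  simpa [hx] using hspan x

theorem ker_sq_eq_ker_iff (hε : ∀ g, ε (of k G g) = 1) :
    LinearMap.ker ε.toLinearMap ^ 2 = LinearMap.ker ε.toLinearMap ↔
      ∀ g, of k G g - 1 ∈ LinearMap.ker ε.toLinearMap ^ 2 := by
  refine ⟨fun h g => by rw [h]; exact of_sub_one_mem_ker hε g, fun h => le_antisymm ?_ ?_⟩
  · rw [pow_two]
    exact ε.ker_mul_ker_le
  · calc LinearMap.ker ε.toLinearMap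
        = Submodule.span k (Set.range fun g => of k G g - 1) := ker_eq_span_of_sub_one hε
      _ ≤ _ := Submodule.span_le.mpr (Set.range_subset_iff.mpr h)

noncomputable def subOneModSq (hε : ∀ g, ε (of k G g) = 1) :
    G →* Multiplicative (MonoidAlgebra k G ⧸ LinearMap.ker ε.toLinearMap ^ 2) where
  toFun g := .ofAdd (Submodule.Quotient.mk (of k G g - 1))
  map_one' := by simp only [map_one, sub_self, Submodule.Quotient.mk_zero, ofAdd_zero]
  map_mul' g h := by
    rw [← ofAdd_add, ← Submodule.Quotient.mk_add, EmbeddingLike.apply_eq_iff_eq,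
      Submodule.Quotient.eq, pow_two]
    convert Submodule.mul_mem_mul (of_sub_one_mem_ker hε g) (of_sub_one_mem_ker hε h) using 1
    rw [map_mul]
    noncomm_ring

theorem eq_zero_of_of_sub_one_mem_ker_sq (hε : ∀ g, ε (of k G g) = 1) (χ : Additive G →+ k)
    {g : G} (hg : of k G g - 1 ∈ LinearMap.ker ε.toLinearMap ^ 2) : χ (.ofMul g) = 0 := by
  set ψ := MonoidAlgebra.lift k (DualNumber k) G (dualNumberHom χ)
  have hfst : (TrivSqZeroExt.fstHom k k k).comp ψ = ε :=
    algHom_ext (fun g => by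
      rw [← of_apply, AlgHom.comp_apply, lift_of, dualNumberHom_apply, hε]
      simp) (Subsingleton.elim _ _)
  have hK : ∀ x ∈ LinearMap.ker ε.toLinearMap, ψ x = TrivSqZeroExt.inr (ψ x).snd := by
    intro x hx
    refine TrivSqZeroExt.ext ?_ rfl
    have hx : ε x = 0 := hx
    simpa [← hfst] using hx
  have hK2 : LinearMap.ker ε.toLinearMap ^ 2 ≤ LinearMap.ker ψ.toLinearMap := by
    rw [pow_two]
    refine Submodule.mul_le.mpr fun x hx y hy => ?_
    rw [LinearMap.mem_ker, AlgHom.toLinearMap_apply, map_mul, hK x hx, hK y hy,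
      TrivSqZeroExt.inr_mul_inr]
  have hψ := hK2 hg
  rw [LinearMap.mem_ker, AlgHom.toLinearMap_apply, map_sub, lift_of, map_one,
    dualNumberHom_apply, add_sub_cancel_left, ← TrivSqZeroExt.inr_zero] at hψ
  exact TrivSqZeroExt.inr_injective hψ

end Augmentation

section CharZero

variable {k G : Type*} [Field k] [CharZero k] [Group G] {ε : MonoidAlgebra k G →ₐ[k] k}

theorem of_sub_one_mem_ker_sq_of_isOfFinOrder (hε : ∀ g, ε (of k G g) = 1) {g : G}
    (hg : IsOfFinOrder (Abelianization.of g)) :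
    of k G g - 1 ∈ LinearMap.ker ε.toLinearMap ^ 2 := by
  have : IsAddTorsionFree (MonoidAlgebra k G ⧸ LinearMap.ker ε.toLinearMap ^ 2) :=
    .of_isTorsionFree k _
  have hone := ((Abelianization.lift (subOneModSq hε)).isOfFinOrder hg).eq_one'
  rw [Abelianization.lift_apply_of] at hone
  exact (Submodule.Quotient.mk_eq_zero _).mp hone

theorem isOfFinOrder_of_of_sub_one_mem_ker_sq (hε : ∀ g, ε (of k G g) = 1) {g : G}
    (hg : of k G g - 1 ∈ LinearMap.ker ε.toLinearMap ^ 2) :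
    IsOfFinOrder (Abelianization.of g) := by
  by_contra hinf
  obtain ⟨f, hf⟩ := exists_addMonoidHom_rat_eq_one_of_not_isOfFinAddOrder
    (a := Additive.ofMul (Abelianization.of g)) (isOfFinAddOrder_ofMul_iff.not.mpr hinf)
  let χ : Additive G →+ k :=
    (Rat.castHom k).toAddMonoidHom.comp (f.comp (MonoidHom.toAdditive Abelianization.of))
  have hχ : χ (.ofMul g) = 1 := by simp [χ, hf]
  exact one_ne_zero (hχ ▸ eq_zero_of_of_sub_one_mem_ker_sq hε χ hg)

theorem of_sub_one_mem_ker_sq_iff (hε : ∀ g, ε (of k G g) = 1) (g : G) :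
    of k G g - 1 ∈ LinearMap.ker ε.toLinearMap ^ 2 ↔ IsOfFinOrder (Abelianization.of g) :=
  ⟨isOfFinOrder_of_of_sub_one_mem_ker_sq hε, of_sub_one_mem_ker_sq_of_isOfFinOrder hε⟩

end CharZero

end MonoidAlgebra

/-- For a group `Γ` with group algebra `ℂ[Γ]` and augmentation `ε`, the
following are equivalent: `K_∞ = K₁`, `K₂ = K₁`, and the abelianization of `Γ`
is a torsion group. -/
theorem Kinf_eq_K1_iff_abelianization_torsion
    {Γ : Type*} [Group Γ]
    (ε : MonoidAlgebra ℂ Γ →ₐ[ℂ] ℂ)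
    (hε : ∀ x : Γ, ε (MonoidAlgebra.of ℂ Γ x) = 1) :
    List.TFAE
      [ (⨅ n : ℕ, (LinearMap.ker ε.toLinearMap) ^ (n + 1))
          = LinearMap.ker ε.toLinearMap,
        (LinearMap.ker ε.toLinearMap) ^ 2 = LinearMap.ker ε.toLinearMap,
        ∀ x : Abelianization Γ, IsOfFinOrder x ] := by
  tfae_have 1 ↔ 2 := Submodule.iInf_pow_succ_eq_self_iff _ ε.ker_mul_ker_le
  tfae_have 2 ↔ 3 := by
    rw [ker_sq_eq_ker_iff hε, Abelianization.of_surjective.forall]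
    exact forall_congr' (of_sub_one_mem_ker_sq_iff hε)
  tfae_finish
end

section
/- Let B be a unital ℂ-*-algebra, ε : B → ℂ a unital *-algebra homomorphism, and α, γ ∈ B elements satisfying the SU_{−1}(2) relations: αγ = −γα, αγ* = −γ*α, γγ* = γ*γ, α*α + γ*γ = 1, αα* + γγ* = 1, together with ε(α) = 1 and ε(γ) = 0. Then γ ∈ K_∞ = ⋂_{n≥1} (ker ε)ⁿ. -/
/-- The `SU_{−1}(2)` computation of the paper: if `α, γ` satisfy the defining
relations of `O(SU_{−1}(2)) ≅ O(O₂⁺)` and `ε(α) = 1`, `ε(γ) = 0`, then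
`γ ∈ K_∞ = ⋂_{n ≥ 1} (ker ε)ⁿ`. -/
theorem gamma_mem_Kinf_SUminus1
    {B : Type*} [Ring B] [Algebra ℂ B] [StarRing B] [StarModule ℂ B]
    (ε : B →ₐ[ℂ] ℂ)
    (α γ : B)
    (h1 : α * γ = - (γ * α))
    (h2 : α * star γ = - (star γ * α))
    (h3 : γ * star γ = star γ * γ)
    (h4 : star α * α + star γ * γ = 1)
    (h5 : α * star α + γ * star γ = 1)
    (hεα : ε α = 1) (hεγ : ε γ = 0) :
    γ ∈ ⨅ n : ℕ, (LinearMap.ker ε.toLinearMap) ^ (n + 1) := by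
  set K := LinearMap.ker ε.toLinearMap with hK
  have hδ : (α - 1) ∈ K := by
    simp [hK, LinearMap.mem_ker, hεα]
  have hγK : γ ∈ K := by simp [hK, LinearMap.mem_ker, hεγ]
  have key : γ = (-(1/2 : ℂ)) • ((α - 1) * γ + γ * (α - 1)) := by
    have e : (α - 1) * γ + γ * (α - 1) = -((2:ℂ) • γ) := by
      have h' : (α - 1) * γ + γ * (α - 1) = α * γ + γ * α - (γ + γ) := by noncomm_ring
      rw [h', h1, two_smul]; abel
    rw [e, smul_neg, neg_smul, neg_neg, smul_smul]
    norm_num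
  have main : ∀ n : ℕ, γ ∈ K ^ (n + 1) := by
    intro n
    induction n with
    | zero => simpa using hγK
    | succ m ih =>
      rw [key]
      refine Submodule.smul_mem _ _ (Submodule.add_mem _ ?_ ?_)
      · have := Submodule.mul_mem_mul hδ ih
        rwa [show K * K ^ (m + 1) = K ^ (m + 1 + 1) from (pow_succ' K (m+1)).symm] at this
      · have := Submodule.mul_mem_mul ih hδ
        rwa [show K ^ (m + 1) * K = K ^ (m + 1 + 1) from (pow_succ K (m+1)).symm] at this
  exact Submodule.mem_iInf _ |>.mpr main
end

section
/- Let B be a unital associative ℂ-algebra, ε : B → ℂ a unital ℂ-algebra homomorphism, and φ : B → ℂ a ℂ-linear functional satisfying the Gaussian product identity. Suppose X ⊆ B generates B as a unital ℂ-algebra and φ(xy) = φ(yx) for all x, y ∈ X. Then φ is a trace, i.e. φ(ab) = φ(ba) for all a, b ∈ B, and φ vanishes on the two-sided ideal of B generated by all commutators ab − ba (a, b ∈ B). -/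
/-- Remark `remclass` of the paper: if a Gaussian generating functional `φ`
satisfies `φ(xy) = φ(yx)` on a generating set `X`, then `φ` is a trace and
vanishes on the two-sided ideal generated by all commutators. -/
theorem gaussian_trace_of_comm_on_generators
    {B : Type*} [Ring B] [Algebra ℂ B]
    (ε : B →ₐ[ℂ] ℂ) (φ : B →ₗ[ℂ] ℂ)
    (hG : ∀ a b c : B, φ (a * b * c) =
      φ (a * b) * ε c + φ (a * c) * ε b + φ (b * c) * ε a
      - φ a * ε (b * c) - φ b * ε (a * c) - φ c * ε (a * b))
    (X : Set B) (hgen : Algebra.adjoin ℂ X = ⊤)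
    (hcomm : ∀ x ∈ X, ∀ y ∈ X, φ (x * y) = φ (y * x)) :
    (∀ a b : B, φ (a * b) = φ (b * a)) ∧
    (∀ z ∈ Submodule.span ℂ
        {z : B | ∃ x y a b : B, z = x * (a * b - b * a) * y}, φ z = 0) := by
  -- multiplicativity lemma in the first argument
  have lem1 : ∀ a b c : B, φ (a * c) = φ (c * a) → φ (b * c) = φ (c * b) →
      φ (a * b * c) = φ (c * (a * b)) := by
    intro a b c ha hb
    have h1 := hG a b c
    have h2 := hG c a b
    rw [show c * (a * b) = c * a * b from (mul_assoc c a b).symm]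
    simp only [map_mul] at h1 h2
    linear_combination h1 - h2 + ε b * ha + ε a * hb
  -- multiplicativity lemma in the second argument
  have lem2 : ∀ a c d : B, φ (a * c) = φ (c * a) → φ (a * d) = φ (d * a) →
      φ (a * (c * d)) = φ (c * d * a) := by
    intro a c d hc hd
    have h1 := hG a c d
    have h2 := hG c d a
    rw [← mul_assoc]
    simp only [map_mul] at h1 h2
    linear_combination h1 - h2 + ε d * hc + ε c * hd
  have key : ∀ c ∈ X, ∀ a : B, φ (a * c) = φ (c * a) := by
    intro c hc a
    have ha : a ∈ Algebra.adjoin ℂ X := by rw [hgen]; exact Algebra.mem_top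
    induction ha using Algebra.adjoin_induction with
    | mem x hx => exact hcomm x hx c hc
    | algebraMap r => rw [Algebra.commutes]
    | add x y hx hy ihx ihy => simp [add_mul, mul_add, ihx, ihy]
    | mul x y hx hy ihx ihy => exact lem1 x y c ihx ihy
  have trace : ∀ a b : B, φ (a * b) = φ (b * a) := by
    intro a b
    have hb : b ∈ Algebra.adjoin ℂ X := by rw [hgen]; exact Algebra.mem_top
    induction hb using Algebra.adjoin_induction with
    | mem x hx => exact key x hx a
    | algebraMap r => rw [Algebra.commutes]
    | add x y hx hy ihx ihy => simp [add_mul, mul_add, ihx, ihy]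
    | mul x y hx hy ihx ihy => exact lem2 a x y ihx ihy
  refine ⟨trace, ?_⟩
  have hcomm0 : ∀ u a b : B, φ (u * (a * b - b * a)) = 0 := by
    intro u a b
    have h1 := hG u a b
    have h2 := hG u b a
    have ht := trace a b
    simp only [map_mul] at h1 h2
    have : φ (u * (a * b) - u * (b * a)) = φ (u * (a * b)) - φ (u * (b * a)) := by
      simp
    rw [mul_sub]
    rw [this, ← mul_assoc, ← mul_assoc] at *
    linear_combination h1 - h2 + ε u * ht
  have hset : ∀ z ∈ {z : B | ∃ x y a b : B, z = x * (a * b - b * a) * y}, φ z = 0 := by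
    rintro z ⟨x, y, a, b, rfl⟩
    rw [trace (x * (a * b - b * a)) y, ← mul_assoc]
    exact hcomm0 (y * x) a b
  intro z hz
  have : Submodule.span ℂ {z : B | ∃ x y a b : B, z = x * (a * b - b * a) * y} ≤
      LinearMap.ker φ := Submodule.span_le.mpr (fun z hz => hset z hz)
  exact this hz
end

section
/- Let B be a unital associative ℂ-algebra, ε : B → ℂ a unital ℂ-algebra homomorphism, Γ a group, N ≥ 1, and for each g ∈ Γ let u(g) be an N×N matrix with entries in B such that u(g)_{ij}·u(h)_{ik} = δ_{jk}·u(gh)_{ij} for all g,h ∈ Γ and all indices i,j,k, and ε(u(g)_{ij}) = δ_{ij} for all g ∈ Γ and all i,j. Then for every g ∈ Γ and all i ≠ j, the off-diagonal coefficient u(g)_{ij} lies in K_∞ = ⋂_{n≥1} (ker ε)ⁿ. -/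
/-- The free wreath product computation of the paper: if matrices `u(g)` over
`B` satisfy the magic-type relations `u(g)_{ij} u(h)_{ik} = δ_{jk} u(gh)_{ij}`
and `ε(u(g)_{ij}) = δ_{ij}`, then all off-diagonal coefficients lie in
`K_∞ = ⋂_{n ≥ 1} (ker ε)ⁿ`. -/
theorem offdiagonal_mem_Kinf_freeWreath
    {B : Type*} [Ring B] [Algebra ℂ B]
    {Γ : Type*} [Group Γ] (N : ℕ) (hN : 1 ≤ N)
    (ε : B →ₐ[ℂ] ℂ)
    (u : Γ → Matrix (Fin N) (Fin N) B)
    (hrel : ∀ (g h : Γ) (i j k : Fin N),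
      u g i j * u h i k = if j = k then u (g * h) i j else 0)
    (hε : ∀ (g : Γ) (i j : Fin N), ε (u g i j) = if i = j then 1 else 0) :
    ∀ (g : Γ) (i j : Fin N), i ≠ j →
      u g i j ∈ ⨅ n : ℕ, (LinearMap.ker ε.toLinearMap) ^ (n + 1) := by
  intro g i j hij
  rw [Submodule.mem_iInf]
  intro n
  induction n with
  | zero =>
    rw [pow_one, LinearMap.mem_ker]
    simpa [hij] using hε g i j
  | succ n ih =>
    have h := hrel g 1 i j j
    simp at h
    rw [← h, pow_succ]
    exact Submodule.mul_mem_mul ih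
      (by rw [LinearMap.mem_ker]; simpa [hij] using hε 1 i j)
end
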